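/- arXiv:2006.07027 — 4 statements merged into one kernel-verified Lean document; each statement's English description precedes it below -/
import Mathlib

section
/- Φ satisfies the recurrence on functionals: for any functional ℓ on T(V), basis vector e_i, and sequence x of length L, ⟨ℓ ⊗ e_i, Φ(x_1,...,x_L)⟩ = Σ_{k=1}^{L-1} ⟨ℓ, Φ(x_1,...,x_k)⟩ · ⟨e_i, x_{k+1}⟩, where ℓ is supported on degree m and ℓ ⊗ e_i on degree m+1. -/
/-- Φ_m(x₁,...,x_L) = Σ_{1 ≤ i₁ < ... < i_m ≤ L} x_{i₁} ⊗ ... ⊗ x_{i_m} ∈ (ℝ^d)^{⊗m},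
given in coordinates: its coordinate at a multi-index idx : Fin m → Fin d. -/
def PhiM (d m : ℕ) (x : List (Fin d → ℝ)) : (Fin m → Fin d) → ℝ :=
  fun idx => ∑ f ∈ Finset.univ.filter
      (fun f : Fin m → Fin x.length => ∀ a b : Fin m, a < b → f a < f b),
    ∏ k, x.get (f k) (idx k)

/-- The pairing ⟨ℓ, Φ_m(x)⟩ of a degree-m functional ℓ (in coordinates) with Φ_m(x). -/
def pairPhi (d m : ℕ) (ℓ : (Fin m → Fin d) → ℝ) (x : List (Fin d → ℝ)) : ℝ :=
  ∑ idx : Fin m → Fin d, ℓ idx * PhiM d m x idx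

/-- The functional ℓ ⊗ e_i : if ℓ is a degree-m functional, ℓ ⊗ e_i has degree m+1,
with coordinates (ℓ ⊗ e_i)(idx) = ℓ(idx restricted) · [idx_last = i]. -/
def extFun (d m : ℕ) (ℓ : (Fin m → Fin d) → ℝ) (i : Fin d) :
    (Fin (m + 1) → Fin d) → ℝ :=
  fun idx => ℓ (fun k => idx k.castSucc) * (if idx (Fin.last m) = i then 1 else 0)

/-!
A strictly increasing multi-index `i₁ < ⋯ < i_{m+1}` is the same as its last entry `j` together
with a strictly increasing multi-index below `j`. Summing over `j` first gives, coordinatewise,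
`Φ_{m+1}(x₁, …, x_L) = ∑_j Φ_m(x₁, …, x_j) ⊗ x_{j+1}`, and pairing with `ℓ ⊗ e_i` reads off the
`i`-th coordinate of `x_{j+1}`. The term `j = 0` vanishes since `Φ_{m+1}` of the empty sequence is `0`.
-/

open Finset

lemma Fin.strictMono_snoc_iff {α : Type*} [Preorder α] {m : ℕ} {g : Fin m → α} {a : α} :
    StrictMono (Fin.snoc (α := fun _ => α) g a) ↔ StrictMono g ∧ ∀ k, g k < a := by
  refine ⟨fun h => ⟨fun b c hbc => ?_, fun k => ?_⟩, fun ⟨hg, ha⟩ b c hbc => ?_⟩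
  · simpa using h (Fin.castSucc_lt_castSucc_iff.mpr hbc)
  · simpa using h (Fin.castSucc_lt_last k)
  · obtain ⟨c, rfl⟩ | rfl := c.eq_castSucc_or_eq_last
    · obtain ⟨b, rfl⟩ | rfl := b.eq_castSucc_or_eq_last
      · simpa using hg (Fin.castSucc_lt_castSucc_iff.mp hbc)
      · exact absurd hbc (Fin.castSucc_lt_last c).not_gt
    · obtain ⟨b, rfl⟩ | rfl := b.eq_castSucc_or_eq_last
      · simpa using ha b
      · exact absurd hbc (lt_irrefl _)

lemma Fin.sum_fun_snoc {M α : Type*} [AddCommMonoid M] [Fintype α] {m : ℕ}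
    (G : (Fin (m + 1) → α) → M) :
    ∑ f, G f = ∑ a, ∑ g : Fin m → α, G (Fin.snoc g a) := by
  rw [← (Fin.snocEquiv fun _ => α).sum_comp, Fintype.sum_prod_type]
  rfl

lemma Fin.sum_strictMono_succ {M : Type*} [AddCommMonoid M] {m n : ℕ}
    (F : (Fin (m + 1) → Fin n) → M) :
    ∑ f ∈ univ.filter StrictMono, F f =
      ∑ j, ∑ g ∈ univ.filter (fun g : Fin m → Fin n => StrictMono g ∧ ∀ k, g k < j),
        F (Fin.snoc g j) := by
  simp only [sum_filter, Fin.sum_fun_snoc, Fin.strictMono_snoc_iff]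

lemma Fin.sum_strictMono_castLE {M : Type*} [AddCommMonoid M] {m n N : ℕ} (h : n ≤ N)
    (F : (Fin m → Fin N) → M) :
    ∑ g ∈ univ.filter (StrictMono : (Fin m → Fin n) → Prop), F (Fin.castLE h ∘ g) =
      ∑ g ∈ univ.filter (fun g : Fin m → Fin N => StrictMono g ∧ ∀ k, (g k : ℕ) < n), F g := by
  refine sum_nbij (Fin.castLE h ∘ ·) (fun g hg => ?_) (fun g₁ _ g₂ _ e => ?_) (fun G hG => ?_)
    (fun _ _ => rfl)
  · simp only [mem_filter, mem_univ, true_and] at hg ⊢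
    exact ⟨(Fin.strictMono_castLE h).comp hg, fun k => (g k).isLt⟩
  · exact funext fun k => Fin.castLE_injective h (congrFun e k)
  · simp only [coe_filter, mem_univ, true_and, Set.mem_ofPred_eq] at hG ⊢
    exact ⟨fun k => ⟨G k, hG.2 k⟩, fun a b hab => hG.1 hab, rfl⟩

lemma PhiM_take (d m : ℕ) (l : List (Fin d → ℝ)) {j : ℕ} (hj : j ≤ l.length)
    (idx : Fin m → Fin d) :
    PhiM d m (l.take j) idx =
      ∑ g ∈ univ.filter (fun g : Fin m → Fin l.length => StrictMono g ∧ ∀ k, (g k : ℕ) < j),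
        ∏ k, l.get (g k) (idx k) := by
  conv_rhs => rw [← List.length_take_of_le hj]
  rw [← Fin.sum_strictMono_castLE (List.length_take_le' j l)]
  exact sum_congr rfl fun g _ => prod_congr rfl fun k _ => by simp

lemma PhiM_succ (d m : ℕ) (l : List (Fin d → ℝ)) (idx : Fin (m + 1) → Fin d) :
    PhiM d (m + 1) l idx =
      ∑ j : Fin l.length, PhiM d m (l.take j) (Fin.init idx) * l.get j (idx (Fin.last m)) := by
  refine (Fin.sum_strictMono_succ _).trans (sum_congr rfl fun j _ => ?_)
  rw [PhiM_take d m l j.isLt.le, sum_mul]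
  refine sum_congr rfl fun g _ => ?_
  rw [Fin.prod_univ_castSucc]
  simp [Fin.init]

lemma pairPhi_extFun (d m : ℕ) (ℓ : (Fin m → Fin d) → ℝ) (i : Fin d) (l : List (Fin d → ℝ)) :
    pairPhi d (m + 1) (extFun d m ℓ i) l =
      ∑ j : Fin l.length, pairPhi d m ℓ (l.take j) * l.get j i := by
  simp only [pairPhi, extFun, PhiM_succ]
  rw [Fin.sum_fun_snoc]
  simp only [Fin.snoc_castSucc, Fin.snoc_last, Fin.init_snoc, mul_boole, ite_mul, zero_mul,
    sum_ite_irrel, sum_const_zero, sum_ite_eq', mem_univ, if_true, mul_sum, sum_mul, mul_assoc]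
  exact sum_comm

lemma pairPhi_nil (d m : ℕ) (ℓ : (Fin (m + 1) → Fin d) → ℝ) : pairPhi d (m + 1) ℓ [] = 0 := by
  simp [pairPhi, PhiM]

/-- Recurrence for functionals on Φ: for ℓ supported on degree m ≥ 1 (written m+1 here),
⟨ℓ ⊗ e_i, Φ(x₁,...,x_L)⟩ = Σ_{k=1}^{L-1} ⟨ℓ, Φ(x₁,...,x_k)⟩ · ⟨e_i, x_{k+1}⟩. -/
theorem stmt6 (d L m : ℕ) (ℓ : (Fin (m + 1) → Fin d) → ℝ) (i : Fin d)
    (x : Fin L → Fin d → ℝ) :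
    pairPhi d (m + 2) (extFun d (m + 1) ℓ i) (List.ofFn x) =
      ∑ k : Fin L, if 1 ≤ (k : ℕ) then
          pairPhi d (m + 1) ℓ ((List.ofFn x).take k) * x k i
        else 0 := by
  rw [pairPhi_extFun]
  refine Eq.trans (sum_congr rfl fun k _ => ?_) (Fin.sum_congr' _ List.length_ofFn)
  split_ifs with hk
  · rw [List.get_ofFn]; rfl
  · have hk0 : (k : ℕ) = 0 := by simpa using hk
    rw [hk0, List.take_zero, pairPhi_nil, zero_mul]
end

section
/- Restricted to sequences whose entries all have first coordinate equal to 1 (i.e. x_i = (1, x_i^1, ..., x_i^d)), the map (x_1,...,x_L) ↦ ∏_{i=1}^L (1 + x_i) into the tensor algebra T(R^{d+1}) is injective, where sequences may have different lengths. -/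
/- The tensor algebra T(ℝ^d) = ∏_{m≥0} (ℝ^d)^{⊗m} is represented in coordinates:
an element is a function from words over `Fin d` to ℝ, where words of length m
index the coordinates of the degree-m component. -/
abbrev TA (d : ℕ) := List (Fin d) → ℝ

/-- The tensor convolution product: (s · t)_m = Σ_{i=0}^m s_i ⊗ t_{m-i}. -/
def Tmul {d : ℕ} (s t : TA d) : TA d :=
  fun w => ∑ i ∈ Finset.range (w.length + 1), s (w.take i) * t (w.drop i)

/-- The unit 1 = (1, 0, 0, ...). -/
def Tone {d : ℕ} : TA d := fun w => if w = [] then 1 else 0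

/-- The element 1 + x = (1, x, 0, 0, ...) for a vector x ∈ ℝ^d. -/
def onePlus {d : ℕ} (v : Fin d → ℝ) : TA d :=
  fun w => match w with
  | [] => 1
  | [a] => v a
  | _ => 0

/-- Φ(x₁,...,x_L) = ∏_{i=1}^L (1 + x_i), product taken in order of indices. -/
def Phi {d : ℕ} (x : List (Fin d → ℝ)) : TA d :=
  (x.map onePlus).foldr Tmul Tone

lemma onePlus_long {d : ℕ} (v : Fin d → ℝ) (w : List (Fin d)) (h : 2 ≤ w.length) :
    onePlus v w = 0 := by
  match w with
  | [] => simp at h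
  | [a] => simp at h
  | a :: b :: t => rfl

lemma Tmul_onePlus {d : ℕ} (v : Fin d → ℝ) (s : TA d) (w : List (Fin d)) :
    Tmul (onePlus v) s w = s w + (match w with | [] => 0 | a :: t => v a * s t) := by
  match w with
  | [] => simp [Tmul, onePlus]
  | a :: t =>
    show (∑ i ∈ Finset.range (t.length + 1 + 1), onePlus v ((a :: t).take i) * s ((a :: t).drop i)) = _
    rw [Finset.sum_range_succ', Finset.sum_range_succ']
    have hz : ∀ i ∈ Finset.range t.length,
        onePlus v ((a :: t).take (i + 1 + 1)) * s ((a :: t).drop (i + 1 + 1)) = 0 := by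
      intro i hi
      rw [onePlus_long, zero_mul]
      simp only [List.length_take, List.length_cons]
      simp only [Finset.mem_range] at hi
      omega
    rw [Finset.sum_congr rfl hz]
    simp [onePlus]
    ring
  
lemma Phi_cons {d : ℕ} (v : Fin d → ℝ) (xs : List (Fin d → ℝ)) :
    Phi (v :: xs) = Tmul (onePlus v) (Phi xs) := rfl

lemma Phi_long {d : ℕ} (x : List (Fin d → ℝ)) (w : List (Fin d))
    (h : x.length < w.length) : Phi x w = 0 := by
  induction x generalizing w with
  | nil =>
    have : w ≠ [] := by intro hw; subst hw; simp at h
    simp [Phi, Tone, this]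
  | cons v xs ih =>
    match w with
    | [] => simp at h
    | a :: t =>
      rw [Phi_cons, Tmul_onePlus]
      simp only [List.length_cons] at h
      show Phi xs (a :: t) + v a * Phi xs t = 0
      rw [ih (a :: t) (by simp; omega), ih t (by omega)]
      ring

lemma Phi_zeros {d : ℕ} (x : List (Fin (d + 1) → ℝ)) (hx : ∀ v ∈ x, v 0 = 1) (m : ℕ) :
    Phi x (List.replicate m 0) = (x.length).choose m := by
  induction x generalizing m with
  | nil =>
    match m with
    | 0 => simp [Phi, Tone]
    | m + 1 => simp [Phi, Tone, List.replicate]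
  | cons v xs ih =>
    have hv : v 0 = 1 := hx v (by simp)
    have hxs : ∀ u ∈ xs, u 0 = 1 := fun u hu => hx u (by simp [hu])
    rw [Phi_cons, Tmul_onePlus]
    match m with
    | 0 => simpa using ih hxs 0
    | m + 1 =>
      rw [List.replicate_succ]
      show Phi xs (List.replicate (m+1) 0) + v 0 * Phi xs (List.replicate m 0) = _
      rw [ih hxs, ih hxs, hv, List.length_cons, Nat.choose_succ_succ, Nat.cast_add]
      ring

lemma Phi_head {d : ℕ} (v : Fin (d + 1) → ℝ) (xs : List (Fin (d + 1) → ℝ))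
    (hxs : ∀ u ∈ xs, u 0 = 1) (a : Fin (d + 1)) :
    Phi (v :: xs) (a :: List.replicate xs.length 0) = v a := by
  rw [Phi_cons, Tmul_onePlus]
  show Phi xs (a :: List.replicate xs.length 0) + v a * Phi xs (List.replicate xs.length 0) = v a
  rw [Phi_long _ _ (by simp), Phi_zeros xs hxs, Nat.choose_self]
  push_cast; ring

lemma Tmul_cancel {d : ℕ} (v : Fin d → ℝ) (s t : TA d)
    (h : Tmul (onePlus v) s = Tmul (onePlus v) t) : s = t := by
  funext w
  induction w with
  | nil =>
    have := congrFun h []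
    rw [Tmul_onePlus, Tmul_onePlus] at this
    simpa using this
  | cons a w ih =>
    have := congrFun h (a :: w)
    rw [Tmul_onePlus, Tmul_onePlus] at this
    simp only at this
    rw [ih] at this
    linarith

/-- On Seq¹(ℝ^{d+1}), the set of finite sequences all of whose entries have first
coordinate 1, the map (x₁,...,x_L) ↦ ∏ᵢ (1 + xᵢ) ∈ T(ℝ^{d+1}) is injective
(sequences may have different lengths). -/
theorem stmt7 (d : ℕ) (x y : List (Fin (d + 1) → ℝ))
    (hx : ∀ v ∈ x, v 0 = 1) (hy : ∀ v ∈ y, v 0 = 1)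
    (h : Phi x = Phi y) : x = y := by
  have hlen : x.length = y.length := by
    have h1 := Phi_zeros x hx x.length
    have h2 := Phi_zeros y hy y.length
    rw [h] at h1
    rw [← h] at h2
    rw [Phi_zeros y hy] at h1
    rw [Phi_zeros x hx] at h2
    rw [Nat.choose_self] at h1 h2
    by_contra hne
    rcases Nat.lt_or_ge x.length y.length with hlt | hge
    · rw [Nat.choose_eq_zero_of_lt hlt] at h2; norm_num at h2
    · have : y.length < x.length := lt_of_le_of_ne hge (fun e => hne e.symm)
      rw [Nat.choose_eq_zero_of_lt this] at h1; norm_num at h1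
  induction x generalizing y with
  | nil =>
    match y with
    | [] => rfl
    | u :: ys => simp at hlen
  | cons v xs ih =>
    match y with
    | [] => simp at hlen
    | u :: ys =>
      simp only [List.length_cons, Nat.succ_inj] at hlen
      have hxs : ∀ w ∈ xs, w 0 = 1 := fun w hw => hx w (by simp [hw])
      have hys : ∀ w ∈ ys, w 0 = 1 := fun w hw => hy w (by simp [hw])
      have hvu : v = u := by
        funext a
        have h1 := Phi_head v xs hxs a
        have h2 := Phi_head u ys hys a
        rw [h, hlen] at h1
        rw [h1] at h2
        exact h2
      subst hvu
      have hPhi : Phi xs = Phi ys := by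
        apply Tmul_cancel v
        rw [← Phi_cons, ← Phi_cons, h]
      rw [ih ys hxs hys hPhi hlen]
end

section
/- Quasi-shuffle identity at second order: for a sequence x in R^d and basis functionals, ⟨e_i, Φ(x)⟩ · ⟨e_j ⊗ e_k, Φ(x)⟩ = Σ over the five quasi-shuffle terms, namely (Σ_a ⟨e_i,x_a⟩)(Σ_{b<c} ⟨e_j,x_b⟩⟨e_k,x_c⟩) = Σ_{a<b<c} [⟨e_i,x_a⟩⟨e_j,x_b⟩⟨e_k,x_c⟩ + ⟨e_j,x_a⟩⟨e_i,x_b⟩⟨e_k,x_c⟩ + ⟨e_j,x_a⟩⟨e_k,x_b⟩⟨e_i,x_c⟩] + Σ_{a<b} [⟨e_i,x_a⟩⟨e_j,x_a⟩⟨e_k,x_b⟩ + ⟨e_j,x_a⟩⟨e_i,x_b⟩⟨e_k,x_b⟩]. -/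
theorem aux14 {L : ℕ} (a b c : Fin L) (v : ℝ) :
    (if b < c then v else 0) =
      (if a < b ∧ b < c then v else 0) + (if b < a ∧ a < c then v else 0) +
      (if b < c ∧ c < a then v else 0) + (if a = b ∧ b < c then v else 0) +
      (if b < a ∧ a = c then v else 0) := by
  simp only [Fin.lt_def, Fin.ext_iff]
  split_ifs <;> first | omega | ring

theorem pair14 {L : ℕ} (f : Fin L → Fin L → ℝ) :
    ∑ p ∈ Finset.univ.filter (fun p : Fin L × Fin L => p.1 < p.2), f p.1 p.2 =
      ∑ a, ∑ b, if a < b then f a b else 0 := by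
  rw [Finset.sum_filter, Fintype.sum_prod_type]

theorem triple14 {L : ℕ} (g : Fin L → Fin L → Fin L → ℝ) :
    ∑ t ∈ Finset.univ.filter
        (fun t : Fin L × Fin L × Fin L => t.1 < t.2.1 ∧ t.2.1 < t.2.2),
      g t.1 t.2.1 t.2.2 =
      ∑ a, ∑ b, ∑ c, if a < b ∧ b < c then g a b c else 0 := by
  rw [Finset.sum_filter, Fintype.sum_prod_type]
  exact Finset.sum_congr rfl fun a _ => by rw [Fintype.sum_prod_type]

theorem collapse1 {L : ℕ} (F : Fin L → Fin L → Fin L → ℝ) :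
    (∑ a, ∑ b, ∑ c, if a = b ∧ b < c then F a b c else 0) =
      ∑ a, ∑ c, if a < c then F a a c else 0 := by
  refine Finset.sum_congr rfl fun a _ => ?_
  rw [Finset.sum_comm]
  refine Finset.sum_congr rfl fun c _ => ?_
  simp only [ite_and]
  rw [Finset.sum_ite_eq]
  simp

theorem collapse2 {L : ℕ} (F : Fin L → Fin L → Fin L → ℝ) :
    (∑ a, ∑ b, ∑ c, if b < a ∧ a = c then F a b c else 0) =
      ∑ a, ∑ b, if b < a then F a b a else 0 := by
  refine Finset.sum_congr rfl fun a _ => Finset.sum_congr rfl fun b _ => ?_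
  simp only [and_comm, ite_and]
  rw [Finset.sum_ite_eq]
  simp

/-- Quasi-shuffle identity at second order, with ⟨e_i, x_a⟩ = (x_a)_i:
(Σ_a ⟨e_i,x_a⟩)(Σ_{b<c} ⟨e_j,x_b⟩⟨e_k,x_c⟩)
  = Σ_{a<b<c} [⟨e_i,x_a⟩⟨e_j,x_b⟩⟨e_k,x_c⟩ + ⟨e_j,x_a⟩⟨e_i,x_b⟩⟨e_k,x_c⟩
      + ⟨e_j,x_a⟩⟨e_k,x_b⟩⟨e_i,x_c⟩]
    + Σ_{a<b} [⟨e_i,x_a⟩⟨e_j,x_a⟩⟨e_k,x_b⟩ + ⟨e_j,x_a⟩⟨e_i,x_b⟩⟨e_k,x_b⟩]. -/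
theorem stmt14 (d L : ℕ) (x : Fin L → Fin d → ℝ) (i j k : Fin d) :
    (∑ a, x a i) *
        (∑ p ∈ Finset.univ.filter (fun p : Fin L × Fin L => p.1 < p.2),
          x p.1 j * x p.2 k) =
      (∑ t ∈ Finset.univ.filter
          (fun t : Fin L × Fin L × Fin L => t.1 < t.2.1 ∧ t.2.1 < t.2.2),
        (x t.1 i * x t.2.1 j * x t.2.2 k + x t.1 j * x t.2.1 i * x t.2.2 k +
          x t.1 j * x t.2.1 k * x t.2.2 i)) +
      (∑ p ∈ Finset.univ.filter (fun p : Fin L × Fin L => p.1 < p.2),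
        (x p.1 i * x p.1 j * x p.2 k + x p.1 j * x p.2 i * x p.2 k)) := by
  rw [pair14 (fun b c => x b j * x c k),
      triple14 (fun a b c => x a i * x b j * x c k + x a j * x b i * x c k
        + x a j * x b k * x c i),
      pair14 (fun a b => x a i * x a j * x b k + x a j * x b i * x b k),
      Finset.sum_mul]
  -- LHS: ∑ a, x a i * (∑b ∑c if ...)
  have lhs : ∀ a : Fin L,
      x a i * (∑ b, ∑ c, if b < c then x b j * x c k else 0) =
      ∑ b, ∑ c, if b < c then x a i * (x b j * x c k) else 0 := by
    intro a
    rw [Finset.mul_sum]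
    exact Finset.sum_congr rfl fun b _ => by rw [Finset.mul_sum]; simp [mul_ite]
  simp only [lhs]
  have key : ∀ a b c : Fin L,
      (if b < c then x a i * (x b j * x c k) else 0) =
      (if a < b ∧ b < c then x a i * (x b j * x c k) else 0) +
      (if b < a ∧ a < c then x a i * (x b j * x c k) else 0) +
      (if b < c ∧ c < a then x a i * (x b j * x c k) else 0) +
      (if a = b ∧ b < c then x a i * (x b j * x c k) else 0) +
      (if b < a ∧ a = c then x a i * (x b j * x c k) else 0) :=
    fun a b c => aux14 a b c _
  simp only [key, Finset.sum_add_distrib]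
  -- now five triple sums on the left, grouped sums on the right
  rw [collapse1, collapse2]
  have e2 : (∑ a, ∑ b, ∑ c : Fin L,
      if b < a ∧ a < c then x a i * (x b j * x c k) else 0) =
      ∑ a, ∑ b, ∑ c : Fin L,
      if a < b ∧ b < c then x a j * x b i * x c k else 0 := by
    rw [Finset.sum_comm]
    exact Finset.sum_congr rfl fun a _ => Finset.sum_congr rfl fun b _ =>
      Finset.sum_congr rfl fun c _ => by split_ifs <;> ring
  have e3 : (∑ a, ∑ b, ∑ c : Fin L,
      if b < c ∧ c < a then x a i * (x b j * x c k) else 0) =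
      ∑ a, ∑ b, ∑ c : Fin L,
      if a < b ∧ b < c then x a j * x b k * x c i else 0 := by
    rw [Finset.sum_comm]
    refine Finset.sum_congr rfl fun a _ => ?_
    rw [Finset.sum_comm]
    exact Finset.sum_congr rfl fun b _ =>
      Finset.sum_congr rfl fun c _ => by split_ifs <;> ring
  have e5 : (∑ a, ∑ b : Fin L,
      if b < a then x a i * (x b j * x a k) else 0) =
      ∑ a, ∑ b : Fin L, if a < b then x a j * x b i * x b k else 0 := by
    rw [Finset.sum_comm]
    exact Finset.sum_congr rfl fun a _ => Finset.sum_congr rfl fun b _ =>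
      by split_ifs <;> ring
  have e1 : (∑ a, ∑ b, ∑ c : Fin L,
      if a < b ∧ b < c then x a i * (x b j * x c k) else 0) =
      ∑ a, ∑ b, ∑ c : Fin L,
      if a < b ∧ b < c then x a i * x b j * x c k else 0 :=
    Finset.sum_congr rfl fun a _ => Finset.sum_congr rfl fun b _ =>
      Finset.sum_congr rfl fun c _ => by split_ifs <;> ring
  have e4 : (∑ a, ∑ b : Fin L,
      if a < b then x a i * (x a j * x b k) else 0) =
      ∑ a, ∑ b : Fin L, if a < b then x a i * x a j * x b k else 0 :=
    Finset.sum_congr rfl fun a _ => Finset.sum_congr rfl fun b _ =>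
      by split_ifs <;> ring
  rw [e1, e2, e3, e4, e5]
  have split3 : ∀ (P : Prop) [Decidable P] (u v w : ℝ),
      (if P then u + v + w else 0) =
        (if P then u else 0) + (if P then v else 0) + (if P then w else 0) := by
    intros P _ u v w; split_ifs <;> ring
  have split2 : ∀ (P : Prop) [Decidable P] (u v : ℝ),
      (if P then u + v else 0) = (if P then u else 0) + (if P then v else 0) := by
    intros P _ u v; split_ifs <;> ring
  simp only [split3, split2, Finset.sum_add_distrib]
  ring
end

section
/- The quasi-shuffle product identity: for any finite sequence x in R^d and any functionals ℓ_1, ℓ_2 given as words in basis vectors (ℓ = e_{i_1}|...|e_{i_m} pairing with Φ via ⟨ℓ, Φ(x)⟩ = Σ_{k_1<...<k_m} ⟨e_{i_1},x_{k_1}⟩⋯⟨e_{i_m},x_{k_m}⟩), the pointwise product satisfies ⟨ℓ_1, Φ(x)⟩ · ⟨ℓ_2, Φ(x)⟩ = ⟨ℓ_1 ⋆ ℓ_2, Φ(x^⋆)⟩, where ⋆ is defined inductively by (ℓ_1|e_i) ⋆ (ℓ_2|e_j) = (ℓ_1|e_i ⋆ ℓ_2)|e_j + (ℓ_1 ⋆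 ℓ_2|e_j)|e_i + (ℓ_1 ⋆ ℓ_2)|(e_i ⊗ e_j), with e_i ⊗ e_j pairing as ⟨e_i⊗e_j, x_k⟩ = ⟨e_i, x_k⟩⟨e_j, x_k⟩. -/
/- A "letter" is a finite tensor product of basis vectors e_{i₁} ⊗ ... ⊗ e_{i_r},
represented by the list [i₁,...,i_r] (it pairs with a vector v by ∏ v_{i_j});
a "word" is a list of letters; a formal sum of words (all coefficients 1,
with multiplicity) is represented by a list of words. -/
abbrev Letter (d : ℕ) := List (Fin d)
abbrev Word (d : ℕ) := List (Letter d)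

/-- Pairing of a word with Φ(x^⋆):
⟨a₁|...|a_m, Φ(x^⋆)⟩ = Σ_{1≤k₁<...<k_m≤L} ∏_r ⟨a_r, x_{k_r}⟩,
where ⟨e_{i₁}⊗...⊗e_{i_r}, v⟩ = v_{i₁} ⋯ v_{i_r}. -/
def pairW {d : ℕ} (x : List (Fin d → ℝ)) (w : Word d) : ℝ :=
  ∑ f ∈ Finset.univ.filter
      (fun f : Fin w.length → Fin x.length => ∀ a b, a < b → f a < f b),
    ∏ r, ((w.get r).map (x.get (f r))).prod

/-- The quasi-shuffle product on words, written on reversed words so that the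
inductive rule (ℓ₁|e_i) ⋆ (ℓ₂|e_j) = (ℓ₁|e_i ⋆ ℓ₂)|e_j + (ℓ₁ ⋆ ℓ₂|e_j)|e_i
+ (ℓ₁ ⋆ ℓ₂)|(e_i ⊗ e_j) becomes head recursion; the empty word is the unit. -/
def qshRev {d : ℕ} : Word d → Word d → List (Word d)
  | [], w => [w]
  | a :: w1, [] => [a :: w1]
  | a :: w1, b :: w2 =>
      ((qshRev (a :: w1) w2).map (fun w => b :: w)) ++
      ((qshRev w1 (b :: w2)).map (fun w => a :: w)) ++
      ((qshRev w1 w2).map (fun w => (a ++ b) :: w))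
  termination_by w1 w2 => w1.length + w2.length

/-- The quasi-shuffle product ℓ₁ ⋆ ℓ₂ as a formal sum (list) of words. -/
def qsh {d : ℕ} (w1 w2 : Word d) : List (Word d) :=
  (qshRev w1.reverse w2.reverse).map List.reverse

/-! Splitting off the last point `y` of the path, a strictly increasing choice of indices
either uses `y` for the last letter `c` or avoids it, so
`⟨w|c, Φ(x|y)⟩ = ⟨w|c, Φ(x)⟩ + ⟨w, Φ(x)⟩⟨c, y⟩`. Multiplying two such expansions produces
exactly the three terms of the quasi-shuffle recursion, the cross term `⟨a, y⟩⟨b, y⟩` being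
the pairing of `y` with the letter `a ⊗ b`; induction on the path then gives the identity for
arbitrary words. -/

open Finset

section

variable {R : Type*} [CommSemiring R]

def strictMonoSum {m n : ℕ} (g : Fin m → Fin n → R) : R :=
  ∑ f ∈ univ.filter (fun f : Fin m → Fin n => ∀ a b, a < b → f a < f b), ∏ r, g r (f r)

lemma strictMonoSum_zero_left {n : ℕ} (g : Fin 0 → Fin n → R) : strictMonoSum g = 1 := by
  simp [strictMonoSum]

lemma strictMonoSum_succ_zero {m : ℕ} (g : Fin (m + 1) → Fin 0 → R) :
    strictMonoSum g = 0 := by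
  simp [strictMonoSum]

lemma strictMonoSum_succ_succ {m n : ℕ} (g : Fin (m + 1) → Fin (n + 1) → R) :
    strictMonoSum g = strictMonoSum (fun r k => g r k.succ)
      + g 0 0 * strictMonoSum (fun r k => g r.succ k.succ) := by
  unfold strictMonoSum
  -- `f` either avoids `0`, so `f = Fin.succ ∘ f'`,
  -- or starts at `0`, so `f = Fin.cons 0 (Fin.succ ∘ f')`
  rw [← sum_filter_not_add_sum_filter _ (fun f => f 0 = 0), mul_sum, filter_filter, filter_filter]
  congr 1
  · have ne_zero : ∀ f ∈ univ.filter (fun f : Fin (m + 1) → Fin (n + 1) =>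
        (∀ a b, a < b → f a < f b) ∧ ¬ f 0 = 0), ∀ r, f r ≠ 0 := by
      simp only [mem_filter, mem_univ, true_and]
      intro f ⟨hf, h0⟩ r
      rcases Fin.eq_zero_or_eq_succ r with rfl | ⟨r, rfl⟩
      · exact h0
      · exact (Fin.pos_iff_ne_zero.mpr h0 |>.trans (hf _ _ r.succ_pos)).ne'
    refine sum_bij' (fun f hf r => (f r).pred (ne_zero f hf r)) (fun f _ r => (f r).succ)
      ?_ ?_ ?_ ?_ ?_ <;> simp_all [Fin.pred_lt_pred_iff]
  · have ne_zero : ∀ f ∈ univ.filter (fun f : Fin (m + 1) → Fin (n + 1) =>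
        (∀ a b, a < b → f a < f b) ∧ f 0 = 0), ∀ r : Fin m, f r.succ ≠ 0 := by
      simp only [mem_filter, mem_univ, true_and]
      intro f ⟨hf, h0⟩ r
      exact (h0 ▸ hf _ _ r.succ_pos).ne'
    refine sum_bij' (fun f hf r => (f r.succ).pred (ne_zero f hf r))
      (fun f _ => Fin.cons 0 (fun r => (f r).succ)) ?_ ?_ ?_ ?_ ?_
    · simp_all [Fin.pred_lt_pred_iff]
    · simp only [mem_filter, mem_univ, true_and]
      refine fun f hf => ⟨fun a b hab => ?_, rfl⟩
      cases a using Fin.cases <;> cases b using Fin.cases <;> simp_all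
    · intro f hf
      simp only [mem_filter, mem_univ, true_and] at hf
      funext r
      cases r using Fin.cases <;> simp [hf.2]
    · simp
    · intro f hf
      simp only [mem_filter, mem_univ, true_and] at hf
      simp [Fin.prod_univ_succ, hf.2]

end

@[simp]
lemma pairW_nil_right {d : ℕ} (x : List (Fin d → ℝ)) : pairW x [] = 1 :=
  strictMonoSum_zero_left (fun r k => (([] : Word d).get r |>.map (x.get k)).prod)

lemma pairW_nil_left {d : ℕ} {w : Word d} (hw : w ≠ []) : pairW [] w = 0 := by
  obtain ⟨c, w, rfl⟩ := List.exists_cons_of_ne_nil hw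
  exact strictMonoSum_succ_zero (fun r k => ((c :: w).get r |>.map (List.get [] k)).prod)

lemma pairW_cons_cons {d : ℕ} (y : Fin d → ℝ) (x : List (Fin d → ℝ)) (c : Letter d)
    (w : Word d) : pairW (y :: x) (c :: w) = pairW x (c :: w) + (c.map y).prod * pairW x w :=
  strictMonoSum_succ_succ (fun r k => ((c :: w).get r |>.map ((y :: x).get k)).prod)

lemma pairW_append_singleton {d : ℕ} (x : List (Fin d → ℝ)) (y : Fin d → ℝ) (w : Word d)
    (c : Letter d) :
    pairW (x ++ [y]) (w ++ [c]) = pairW x (w ++ [c]) + pairW x w * (c.map y).prod := by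
  induction x generalizing w with
  | nil =>
    cases w <;> simp [pairW_cons_cons, pairW_nil_left]
  | cons z x ih =>
    cases w with
    | nil => simpa [pairW_cons_cons, add_right_comm] using ih []
    | cons b w =>
      simp only [List.cons_append, pairW_cons_cons]
      rw [← List.cons_append, ih, ih, List.cons_append]
      ring

lemma sum_map_pairW_reverse_qshRev {d : ℕ} (x : List (Fin d → ℝ)) (v₁ v₂ : Word d) :
    ((qshRev v₁ v₂).map (fun w => pairW x w.reverse)).sum
      = pairW x v₁.reverse * pairW x v₂.reverse := by
  induction x using List.reverseRecOn generalizing v₁ v₂ with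
  | nil =>
    match v₁, v₂ with
    | [], _ => simp [qshRev]
    | _ :: _, [] => simp [qshRev]
    | a :: t₁, b :: t₂ => simp [qshRev, Function.comp_def, pairW_nil_left]
  | append_singleton x y ih =>
    match v₁, v₂ with
    | [], _ => simp [qshRev]
    | _ :: _, [] => simp [qshRev]
    | a :: t₁, b :: t₂ =>
      have ih₁₂ := ih (a :: t₁) (b :: t₂)
      rw [qshRev] at ih₁₂ ⊢
      simp only [List.map_append, List.map_map, Function.comp_def, List.sum_append,
        List.reverse_cons, pairW_append_singleton, List.sum_map_add, List.sum_map_mul_right,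
        ih] at ih₁₂ ⊢
      rw [List.prod_append]
      linear_combination ih₁₂

theorem pairW_mul_pairW {d : ℕ} (x : List (Fin d → ℝ)) (w₁ w₂ : Word d) :
    pairW x w₁ * pairW x w₂ = ((qsh w₁ w₂).map (pairW x)).sum := by
  simpa [qsh, Function.comp_def] using
    (sum_map_pairW_reverse_qshRev x w₁.reverse w₂.reverse).symm

/-- The quasi-shuffle product identity: for words ℓ₁, ℓ₂ in basis vectors,
⟨ℓ₁, Φ(x)⟩ · ⟨ℓ₂, Φ(x)⟩ = ⟨ℓ₁ ⋆ ℓ₂, Φ(x^⋆)⟩. -/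
theorem stmt18 (d : ℕ) (x : List (Fin d → ℝ)) (w1 w2 : List (Fin d)) :
    pairW x (w1.map (fun i => [i])) * pairW x (w2.map (fun i => [i])) =
      ((qsh (w1.map (fun i => [i])) (w2.map (fun i => [i]))).map
        (fun w => pairW x w)).sum :=
  pairW_mul_pairW x _ _
end
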